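/- arXiv:1206.1638 — 3 statements merged into one kernel-verified Lean document; each statement's English description precedes it below -/
import Mathlib

section
/- Let b be a nonzero complex number and y = b + b⁻¹. Then for n ≥ 1, a complex number x satisfies Tₙ(x) = y if and only if x = a + a⁻¹ for some complex number a with aⁿ = b. -/
/-- Normalized Chebyshev polynomial of the first kind: `T 0 = 2`, `T 1 = X`. -/
noncomputable def chebT (R : Type*) [CommRing R] : ℕ → Polynomial R
  | 0 => 2
  | 1 => Polynomial.X
  | n + 2 => Polynomial.X * chebT R (n + 1) - chebT R n

/-!
Every complex `x` can be written as `a + a⁻¹` (a root of `a² - x a + 1`), and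
`Tₙ(a + a⁻¹) = aⁿ + a⁻ⁿ`. Since `u + u⁻¹ = b + b⁻¹` forces `u = b` or `u = b⁻¹`, the equation
`Tₙ(x) = b + b⁻¹` says `aⁿ = b` or `(a⁻¹)ⁿ = b`, and `a ↦ a⁻¹` does not change
`x`.
-/

open Polynomial

theorem chebT_eval_add_of_mul_eq_one {R : Type*} [CommRing R] {a a' : R} (h : a * a' = 1) :
    ∀ n : ℕ, (chebT R n).eval (a + a') = a ^ n + a' ^ n
  | 0 => by norm_num [chebT]
  | 1 => by simp [chebT]
  | n + 2 => by
    rw [chebT, eval_sub, eval_mul, eval_X, chebT_eval_add_of_mul_eq_one h (n + 1),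
      chebT_eval_add_of_mul_eq_one h n]
    linear_combination (a ^ n + a' ^ n) * h

theorem exists_ne_zero_add_inv_eq {K : Type*} [Field K] [IsAlgClosed K] (x : K) :
    ∃ a : K, a ≠ 0 ∧ a + a⁻¹ = x := by
  obtain ⟨a, ha⟩ : ∃ a : K, (X ^ 2 - C x * X + 1 : K[X]).IsRoot a :=
    IsAlgClosed.exists_root _ <| ne_of_eq_of_ne (by compute_degree!) two_ne_zero
  have hmul : a * (x - a) = 1 := by
    simp only [IsRoot, eval_add, eval_sub, eval_mul, eval_pow, eval_X, eval_C, eval_one] at ha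
    linear_combination -ha
  refine ⟨a, left_ne_zero_of_mul_eq_one hmul, ?_⟩
  rw [inv_eq_of_mul_eq_one_right hmul]
  ring

theorem add_inv_eq_add_inv_iff {K : Type*} [Field K] {u b : K} (hu : u ≠ 0) (hb : b ≠ 0) :
    u + u⁻¹ = b + b⁻¹ ↔ u = b ∨ u = b⁻¹ := by
  have hfactor : u * (u + u⁻¹ - (b + b⁻¹)) = (u - b) * (u - b⁻¹) := by
    field_simp
    ring
  rw [← sub_eq_zero, ← mul_right_inj' hu, mul_zero, hfactor, mul_eq_zero, sub_eq_zero,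
    sub_eq_zero]

/-- For `b ≠ 0`, `y = b + b⁻¹` and `n ≥ 1`, the solutions of `Tₙ(x) = y` are exactly the
numbers `x = a + a⁻¹` where `a` ranges over the `n`-th roots of `b`. -/
theorem chebT_eval_eq_iff (b y : ℂ) (hb : b ≠ 0) (hy : y = b + b⁻¹) (n : ℕ) (hn : 1 ≤ n)
    (x : ℂ) :
    (chebT ℂ n).eval x = y ↔ ∃ a : ℂ, a ^ n = b ∧ x = a + a⁻¹ := by
  subst hy
  constructor
  · obtain ⟨a, ha, rfl⟩ := exists_ne_zero_add_inv_eq x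
    rw [chebT_eval_add_of_mul_eq_one (mul_inv_cancel₀ ha), inv_pow,
      add_inv_eq_add_inv_iff (pow_ne_zero n ha) hb]
    rintro (han | han)
    · exact ⟨a, han, rfl⟩
    · exact ⟨a⁻¹, by rw [inv_pow, han, inv_inv], by rw [inv_inv, add_comm]⟩
  · rintro ⟨a, rfl, rfl⟩
    have ha : a ≠ 0 := by
      rintro rfl
      exact hb (zero_pow (by omega))
    rw [chebT_eval_add_of_mul_eq_one (mul_inv_cancel₀ ha), inv_pow]
end

section
/- Let ω be an invertible element of ℂ, let σ be a skew-symmetric integer matrix, and let 𝒯^ω be the algebra generated by invertible Z₁,…,Zₙ with relations Z_iZ_j = ω^{2σ_{ij}} Z_jZ_i. If ι = ω^{N²}, then the assignment Z_i ↦ Z_i^N extends to an algebra homomorphism F : 𝒯^ι → 𝒯^ω. -/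
/-! If `a * b = q • (b * a)` then `a ^ k * b ^ m = q ^ (k * m) • (b ^ m * a ^ k)`. Hence the
`N`-th powers of the generators of `𝒯^ω` satisfy the defining relations of `𝒯^ι`, since
`(ω ^ (2σᵢⱼ)) ^ (N * N) = ι ^ (2σᵢⱼ)`, and the universal property of `𝒯^ι` gives `F`. -/

section QuasiCommute

variable {R A : Type*} [Monoid R] [Monoid A] [MulAction R A] [IsScalarTower R A A]
  [SMulCommClass R A A] {a b : A} {q : R}

theorem pow_mul_eq_smul_mul_pow_of_mul_eq_smul (h : a * b = q • (b * a)) (k : ℕ) :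
    a ^ k * b = q ^ k • (b * a ^ k) := by
  induction k with
  | zero => simp
  | succ k ih =>
    calc a ^ (k + 1) * b = a ^ k * (a * b) := by rw [pow_succ, mul_assoc]
      _ = q • ((a ^ k * b) * a) := by rw [h, mul_smul_comm, mul_assoc]
      _ = q ^ (k + 1) • (b * a ^ (k + 1)) := by
        rw [ih, smul_mul_assoc, smul_smul, ← pow_succ', mul_assoc, ← pow_succ]

theorem mul_pow_eq_smul_pow_mul_of_mul_eq_smul (h : a * b = q • (b * a)) (m : ℕ) :
    a * b ^ m = q ^ m • (b ^ m * a) := by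
  induction m with
  | zero => simp
  | succ m ih =>
    calc a * b ^ (m + 1) = (a * b ^ m) * b := by rw [pow_succ, mul_assoc]
      _ = q ^ m • (b ^ m * (a * b)) := by rw [ih, smul_mul_assoc, mul_assoc]
      _ = q ^ (m + 1) • (b ^ (m + 1) * a) := by
        rw [h, mul_smul_comm, smul_smul, ← pow_succ, ← mul_assoc, ← pow_succ]

end QuasiCommute

theorem pow_mul_pow_eq_smul_of_mul_eq_smul {R A : Type*} [CommMonoid R] [Monoid A]
    [MulAction R A] [IsScalarTower R A A] [SMulCommClass R A A] {a b : A} {q : R}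
    (h : a * b = q • (b * a)) (k m : ℕ) :
    a ^ k * b ^ m = q ^ (k * m) • (b ^ m * a ^ k) := by
  rw [pow_mul_eq_smul_mul_pow_of_mul_eq_smul (mul_pow_eq_smul_pow_mul_of_mul_eq_smul h m) k,
    ← pow_mul, mul_comm m k]

theorem quantum_torus_frobenius_general (n N : ℕ) (ω : ℂˣ) (σ : Fin n → Fin n → ℤ)
    (Aω Aι : Type) [Ring Aω] [Algebra ℂ Aω] [Ring Aι] [Algebra ℂ Aι]
    (Z : Fin n → Aωˣ) (W : Fin n → Aιˣ)
    (hZ : ∀ i j, (Z i : Aω) * (Z j : Aω) =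
      ((ω ^ (2 * σ i j) : ℂˣ) : ℂ) • ((Z j : Aω) * (Z i : Aω)))
    (hW : ∀ (B : Type) [Ring B] [Algebra ℂ B] (u : Fin n → Bˣ),
      (∀ i j, (u i : B) * (u j : B) =
        (((ω ^ (N ^ 2) : ℂˣ) ^ (2 * σ i j) : ℂˣ) : ℂ) • ((u j : B) * (u i : B))) →
      ∃! f : Aι →ₐ[ℂ] B, ∀ i, f (W i) = u i) :
    ∃ F : Aι →ₐ[ℂ] Aω, ∀ i, F (W i) = (Z i : Aω) ^ N := by
  have hι : ∀ i j, (ω ^ (N ^ 2)) ^ (2 * σ i j) = (ω ^ (2 * σ i j)) ^ (N * N) := fun i j => by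
    rw [← zpow_natCast, ← zpow_natCast, ← zpow_mul, ← zpow_mul, sq]
    ring_nf
  have hZN : ∀ i j, ((Z i ^ N : Aωˣ) : Aω) * ((Z j ^ N : Aωˣ) : Aω) =
      (((ω ^ (N ^ 2)) ^ (2 * σ i j) : ℂˣ) : ℂ) •
        (((Z j ^ N : Aωˣ) : Aω) * ((Z i ^ N : Aωˣ) : Aω)) := fun i j => by
    simpa only [hι, Units.val_pow_eq_pow_val] using
      pow_mul_pow_eq_smul_of_mul_eq_smul (hZ i j) N N
  obtain ⟨F, hF, -⟩ := hW Aω (fun i => Z i ^ N) hZN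
  exact ⟨F, fun i => by rw [hF i, Units.val_pow_eq_pow_val]⟩

/-- Frobenius homomorphism for quantum tori.  Let `𝒯^ω` be a quantum torus over `ℂ` with
invertible generators `Z i` satisfying `Z i * Z j = ω^(2σᵢⱼ) Z j * Z i` for a skew-symmetric
integer matrix `σ`, and let `𝒯^ι` be the analogous algebra for `ι = ω^(N²)`, with generators
`W i`; the latter is encoded by its universal property.  Then `Z i ↦ (Z i)^N` extends to an
algebra homomorphism `F : 𝒯^ι → 𝒯^ω`. -/
theorem quantum_torus_frobenius (n N : ℕ) (ω : ℂˣ) (σ : Fin n → Fin n → ℤ)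
    (hσ : ∀ i j, σ i j = -σ j i)
    (Aω Aι : Type) [Ring Aω] [Algebra ℂ Aω] [Ring Aι] [Algebra ℂ Aι]
    (Z : Fin n → Aωˣ) (W : Fin n → Aιˣ)
    (hZ : ∀ i j, (Z i : Aω) * (Z j : Aω) =
      ((ω ^ (2 * σ i j) : ℂˣ) : ℂ) • ((Z j : Aω) * (Z i : Aω)))
    (hW : ∀ (B : Type) [Ring B] [Algebra ℂ B] (u : Fin n → Bˣ),
      (∀ i j, (u i : B) * (u j : B) =
        (((ω ^ (N ^ 2) : ℂˣ) ^ (2 * σ i j) : ℂˣ) : ℂ) • ((u j : B) * (u i : B))) →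
      ∃! f : Aι →ₐ[ℂ] B, ∀ i, f (W i) = u i) :
    ∃ F : Aι →ₐ[ℂ] Aω, ∀ i, F (W i) = (Z i : Aω) ^ N :=
  quantum_torus_frobenius_general n N ω σ Aω Aι Z W hZ hW
end

section
/- Suppose A⁴ is a primitive N-th root of unity in ℂ and n is an integer with −N < n < N and n ≡ N (mod 2). Then A^{N(N+n)}·[ (N−n)/2 ]_{A⁴}! / [ (N+n)/2 ]_{A⁴}! = −A^{2N−4} · A^{(N−2)(N−2+n)}·[ (N−2−n)/2 ]_{A⁴}! / [ (N−2+n)/2 ]_{A⁴}!, i.e., the ratio of the two left-right pattern coefficients b and b′ equals −A^{2N−4}. -/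
/-- The quantum integer `[k]_a = 1 + a + ⋯ + a^(k-1)` in `ℂ`. -/
noncomputable def qInt (a : ℂ) (k : ℕ) : ℂ := ∑ i ∈ Finset.range k, a ^ i

/-- The quantum factorial `[k]_a! = [k]_a [k-1]_a ⋯ [1]_a`. -/
noncomputable def qFact (a : ℂ) (k : ℕ) : ℂ := ∏ i ∈ Finset.range k, qInt a (i + 1)

/-!
Write `a = A⁴`, `p = (N - n)/2` and `q = (N + n)/2`, so `p + q = N`. Peeling the top factor off
both quantum factorials leaves the ratio `[p]_a / [q]_a`, which equals `-a^p` because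
`a^p (a^q - 1) = 1 - a^p` when `a^N = 1`. The remaining powers of `A` agree since their
exponents `N(N+n) + 2(N-n)` and `(2N-4) + (N-2)(N-2+n)` differ by `4N`.
-/

lemma qInt_mul_sub_one (a : ℂ) (k : ℕ) : qInt a k * (a - 1) = a ^ k - 1 :=
  geom_sum_mul a k

lemma qInt_ne_zero {N : ℕ} {a : ℂ} (h : IsPrimitiveRoot a N) {k : ℕ} (hk0 : k ≠ 0)
    (hk : k < N) : qInt a k ≠ 0 := by
  intro hzero
  have hsum := qInt_mul_sub_one a k
  rw [hzero, zero_mul] at hsum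
  exact h.pow_ne_one_of_pos_of_lt hk0 hk (by linear_combination -hsum)

lemma qFact_succ (a : ℂ) (k : ℕ) : qFact a (k + 1) = qFact a k * qInt a (k + 1) :=
  Finset.prod_range_succ _ _

lemma pow_mul_qInt_eq_neg_qInt {a : ℂ} (ha : a ≠ 1) {p q : ℕ} (hpq : a ^ (p + q) = 1) :
    a ^ p * qInt a q = -qInt a p := by
  refine mul_right_cancel₀ (sub_ne_zero_of_ne ha) ?_
  linear_combination a ^ p * qInt_mul_sub_one a q + qInt_mul_sub_one a p + (pow_add a p q).symm
    + hpq

lemma qFact_succ_div_qFact_succ {a : ℂ} {p q : ℕ} (h : IsPrimitiveRoot a (p + q + 2)) :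
    qFact a (p + 1) / qFact a (q + 1) = -a ^ (p + 1) * (qFact a p / qFact a q) := by
  have hq : qInt a (q + 1) ≠ 0 := qInt_ne_zero h q.succ_ne_zero (by omega)
  have hpq : a ^ (p + 1 + (q + 1)) = 1 := by rw [← h.pow_eq_one]; ring_nf
  rw [qFact_succ, qFact_succ, ← neg_neg (qInt a (p + 1)),
    ← pow_mul_qInt_eq_neg_qInt (h.ne_one (by omega)) hpq, mul_neg, ← mul_assoc, neg_div,
    mul_div_mul_right _ _ hq]
  ring

theorem left_right_coefficient_ratio_general (N : ℕ) (A : ℂ)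
    (hprim : IsPrimitiveRoot (A ^ 4) N) (n : ℤ) (h1 : -(N : ℤ) < n) (h2 : n < N)
    (hpar : ((N : ℤ) - n) % 2 = 0) :
    A ^ ((N : ℤ) * ((N : ℤ) + n)) *
        qFact (A ^ 4) (((N : ℤ) - n) / 2).toNat / qFact (A ^ 4) (((N : ℤ) + n) / 2).toNat =
      -A ^ (2 * (N : ℤ) - 4) *
        (A ^ (((N : ℤ) - 2) * ((N : ℤ) - 2 + n)) *
          qFact (A ^ 4) (((N : ℤ) - 2 - n) / 2).toNat /
          qFact (A ^ 4) (((N : ℤ) - 2 + n) / 2).toNat) := by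
  obtain ⟨p, hp⟩ : ∃ p : ℕ, (N : ℤ) - n = 2 * (p + 1) := ⟨((N - n) / 2 - 1).toNat, by omega⟩
  obtain ⟨q, hq⟩ : ∃ q : ℕ, (N : ℤ) + n = 2 * (q + 1) := ⟨((N + n) / 2 - 1).toNat, by omega⟩
  have hN : N = p + q + 2 := by omega
  have hA : A ≠ 0 := ne_zero_pow four_ne_zero (hprim.ne_zero (by omega))
  have hA4N : A ^ (4 * N : ℤ) = 1 := by
    rw [zpow_mul]
    exact_mod_cast hprim.pow_eq_one
  have hexp : A ^ ((N : ℤ) * ((N : ℤ) + n)) * (A ^ 4) ^ (p + 1) =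
      A ^ (2 * (N : ℤ) - 4) * A ^ (((N : ℤ) - 2) * ((N : ℤ) - 2 + n)) :=
    calc A ^ ((N : ℤ) * ((N : ℤ) + n)) * (A ^ 4) ^ (p + 1)
        _ = A ^ ((N : ℤ) * ((N : ℤ) + n) + 4 * (p + 1)) := by
          rw [zpow_add₀ hA, zpow_mul, ← pow_mul]; norm_cast
        _ = A ^ (2 * (N : ℤ) - 4 + ((N : ℤ) - 2) * ((N : ℤ) - 2 + n)) * A ^ (4 * N : ℤ) := by
          rw [← zpow_add₀ hA]; congr 1; linear_combination (-2) * hp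
        _ = A ^ (2 * (N : ℤ) - 4) * A ^ (((N : ℤ) - 2) * ((N : ℤ) - 2 + n)) := by
          rw [hA4N, mul_one, zpow_add₀ hA]
  rw [show (((N : ℤ) - n) / 2).toNat = p + 1 by omega,
    show (((N : ℤ) + n) / 2).toNat = q + 1 by omega,
    show (((N : ℤ) - 2 - n) / 2).toNat = p by omega,
    show (((N : ℤ) - 2 + n) / 2).toNat = q by omega,
    mul_div_assoc, qFact_succ_div_qFact_succ (hN ▸ hprim)]
  linear_combination (-(qFact (A ^ 4) p / qFact (A ^ 4) q)) * hexp

/-- If `A⁴` is a primitive `N`-th root of unity and `−N < n < N` with `n ≡ N (mod 2)`, then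
`A^{N(N+n)}·[(N−n)/2]! / [(N+n)/2]! = −A^{2N−4} · A^{(N−2)(N−2+n)}·[(N−2−n)/2]! / [(N−2+n)/2]!`
(quantum factorials with parameter `A⁴`), i.e. `b_i = −A^{2N−4} b_i'`. -/
theorem left_right_coefficient_ratio (N : ℕ) (A : ℂ) (hA : A ≠ 0)
    (hprim : IsPrimitiveRoot (A ^ 4) N) (n : ℤ) (h1 : -(N : ℤ) < n) (h2 : n < N)
    (hpar : ((N : ℤ) - n) % 2 = 0) :
    A ^ ((N : ℤ) * ((N : ℤ) + n)) *
        qFact (A ^ 4) (((N : ℤ) - n) / 2).toNat / qFact (A ^ 4) (((N : ℤ) + n) / 2).toNat =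
      -A ^ (2 * (N : ℤ) - 4) *
        (A ^ (((N : ℤ) - 2) * ((N : ℤ) - 2 + n)) *
          qFact (A ^ 4) (((N : ℤ) - 2 - n) / 2).toNat /
          qFact (A ^ 4) (((N : ℤ) - 2 + n) / 2).toNat) :=
  left_right_coefficient_ratio_general N A hprim n h1 h2 hpar
end
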